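/- arXiv:cs/0012008 — 6 statements merged into one kernel-verified Lean document; each statement's English description precedes it below -/
import Mathlib

section
/- Let X be a type, r a transitive relation on X, A a finite type, and α : X → X → A any function (a 'shadow' assigning an abstraction to each pair). If there exists an infinite r-chain N : ℕ → X (that is, r (N i) (N (i+1)) for all i), then there exist a strictly monotone g : ℕ → ℕ and an element a ∈ A such that, setting M = N ∘ g, one has r (M i) (M (i+1)) for all i and α (M j) (M k) = a for all j < k. (This is the paper's Basic Lemma: any shadow of an infinite offspring chain into a finite set of abstractions admits an infinite sub-chain all of whose call branches are mapped to the same abstraction.) -/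
/-- Infinite Ramsey theorem for pairs on ℕ. -/
theorem ramsey_pair {A : Type*} [Finite A] (c : ℕ → ℕ → A) :
    ∃ f : ℕ → ℕ, StrictMono f ∧ ∃ a : A, ∀ i j : ℕ, i < j → c (f i) (f j) = a := by
  classical
  -- step: from an infinite set, extract a point and a monochromatic infinite subset
  have step : ∀ S : Set ℕ, S.Infinite → ∃ x ∈ S, ∃ T : Set ℕ,
      T.Infinite ∧ T ⊆ S ∧ (∀ y ∈ T, x < y) ∧ ∃ a : A, ∀ y ∈ T, c x y = a := by
    intro S hS
    obtain ⟨x, hx⟩ := hS.nonempty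
    have hT0 : (S \ Set.Iic x).Infinite := hS.diff (Set.finite_Iic x)
    haveI : Infinite (S \ Set.Iic x : Set ℕ) := hT0.to_subtype
    obtain ⟨a, ha⟩ := Finite.exists_infinite_fiber (fun y : (S \ Set.Iic x : Set ℕ) => c x y)
    refine ⟨x, hx, {y | y ∈ S ∧ x < y ∧ c x y = a}, ?_, fun y hy => hy.1,
      fun y hy => hy.2.1, a, fun y hy => hy.2.2⟩
    have : Set.Infinite ((Subtype.val) ''
        ((fun y : (S \ Set.Iic x : Set ℕ) => c x y) ⁻¹' {a})) := by
      rw [Set.infinite_coe_iff] at ha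
      exact ha.image (Set.injOn_of_injective Subtype.val_injective)
    apply this.mono
    rintro _ ⟨⟨y, hyS, hyx⟩, hya, rfl⟩
    exact ⟨hyS, by simpa using hyx, hya⟩
  choose x hxmem T hTinf hTsub hTlt a ha using step
  -- iterate
  let S : ℕ → {S : Set ℕ // S.Infinite} := fun n =>
    Nat.rec ⟨Set.univ, Set.infinite_univ⟩ (fun _ p => ⟨T p.1 p.2, hTinf p.1 p.2⟩) n
  have hSsucc : ∀ n, (S (n + 1)).1 ⊆ (S n).1 := fun n => hTsub _ _
  have hSmono : ∀ m n, n ≤ m → (S m).1 ⊆ (S n).1 := by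
    intro m n h
    induction h with
    | refl => exact subset_rfl
    | step h ih => exact fun y hy => ih (hSsucc _ hy)
  let f : ℕ → ℕ := fun n => x (S n).1 (S n).2
  have hfmem : ∀ n m, n < m → f m ∈ (S (n + 1)).1 := by
    intro n m h
    exact hSmono m (n + 1) h (hxmem (S m).1 (S m).2)
  have hfSM : StrictMono f := by
    apply strictMono_nat_of_lt_succ
    intro n
    exact hTlt _ _ _ (hfmem n (n + 1) (Nat.lt_succ_self n))
  -- the color of f n towards its tail
  let b : ℕ → A := fun n => a (S n).1 (S n).2
  have hcol : ∀ n m, n < m → c (f n) (f m) = b n := by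
    intro n m h
    exact ha _ _ _ (hfmem n m h)
  obtain ⟨a₀, ha₀⟩ := Finite.exists_infinite_fiber b
  haveI : Infinite (b ⁻¹' {a₀} : Set ℕ) := ha₀
  let e : ℕ → ℕ := fun n => ((Nat.Subtype.orderIsoOfNat (b ⁻¹' {a₀}) n : ℕ))
  have heSM : StrictMono e := fun i j hij => by
    simpa [e] using (Nat.Subtype.orderIsoOfNat (b ⁻¹' {a₀})).strictMono hij
  have hemem : ∀ n, b (e n) = a₀ := fun n =>
    (Nat.Subtype.orderIsoOfNat (b ⁻¹' {a₀}) n).2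
  exact ⟨f ∘ e, hfSM.comp heSM, a₀, fun i j hij => by
    simpa [hemem i] using hcol (e i) (e j) (heSM hij)⟩

/-- The Basic Lemma: any shadow of an infinite chain into a finite set of
abstractions admits an infinite sub-chain all of whose call branches are
mapped to the same abstraction. -/
theorem basic_lemma {X A : Type*} [Finite A] (r : X → X → Prop)
    (hr : Transitive r) (α : X → X → A) (N : ℕ → X)
    (hN : ∀ i : ℕ, r (N i) (N (i + 1))) :
    ∃ (g : ℕ → ℕ) (a : A), StrictMono g ∧
      (∀ i : ℕ, r ((N ∘ g) i) ((N ∘ g) (i + 1))) ∧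
      (∀ j k : ℕ, j < k → α ((N ∘ g) j) ((N ∘ g) k) = a) := by
  have hchain : ∀ i j : ℕ, i < j → r (N i) (N j) := by
    intro i j h
    induction j with
    | zero => omega
    | succ k ih =>
      rcases Nat.lt_succ_iff_lt_or_eq.mp h with h' | rfl
      · exact hr (ih h') (hN k)
      · exact hN i
  obtain ⟨g, hg, a, hac⟩ := ramsey_pair (fun i j => α (N i) (N j))
  exact ⟨g, a, hg, fun i => hchain _ _ (hg (Nat.lt_succ_self i)),
    fun j k h => hac j k h⟩
end

section
/- Let S be a finite semigroup and let c : ℕ → ℕ → S be a multiplicative coloring, i.e. c i k = c i j * c j k whenever i < j < k. Then there exist a strictly monotone g : ℕ → ℕ and an element a ∈ S with a * a = a such that c (g i) (g j) = a for all i < j. (This is the paper's claim that for a structured shadow the element produced by the Basic Lemma is a circular, idempotent element.) -/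
private lemma step_lemma {S : Type*} [Finite S] (c : ℕ → ℕ → S) (A : Set ℕ)
    (hA : A.Infinite) :
    ∃ (a : S) (B : Set ℕ), B ⊆ A ∧ B.Infinite ∧
      ∀ y ∈ B, sInf A < y ∧ c (sInf A) y = a := by
  set x := sInf A
  have hA' : {y ∈ A | x < y}.Infinite := by
    have : A \ {y ∈ A | x < y} ⊆ Set.Iic x := by
      intro y hy
      simp only [Set.mem_diff, Set.mem_setOf_eq, not_and] at hy
      exact not_lt.mp fun h => hy.2 hy.1 h
    have hfin : (A \ {y ∈ A | x < y}).Finite := (Set.finite_Iic x).subset this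
    have := hA.diff hfin
    refine this.mono fun y hy => ?_
    rcases hy with ⟨hyA, hyD⟩
    by_contra hns
    exact hyD ⟨hyA, hns⟩
  haveI : Infinite {y // y ∈ {y ∈ A | x < y}} := hA'.to_subtype
  obtain ⟨a, ha⟩ := Finite.exists_infinite_fiber
    (fun y : {y // y ∈ {y ∈ A | x < y}} => c x y.1)
  refine ⟨a, {y ∈ A | x < y ∧ c x y = a}, fun y hy => hy.1, ?_, fun y hy => hy.2⟩
  rw [← Set.infinite_coe_iff]
  refine Infinite.of_injective
    (fun z : (fun y : {y // y ∈ {y ∈ A | x < y}} => c x y.1) ⁻¹' {a} =>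
      (⟨z.1.1, z.1.2.1, z.1.2.2, z.2⟩ : {y ∈ A | x < y ∧ c x y = a})) ?_
  intro z w hzw
  simp only [Subtype.mk.injEq] at hzw
  exact Subtype.ext (Subtype.ext hzw)

/-- For a multiplicative coloring of pairs by a finite semigroup, there is a
monochromatic infinite subsequence whose color is idempotent. -/
theorem multiplicative_coloring_idempotent {S : Type*} [Semigroup S] [Finite S]
    (c : ℕ → ℕ → S)
    (hc : ∀ i j k : ℕ, i < j → j < k → c i k = c i j * c j k) :
    ∃ (g : ℕ → ℕ) (a : S), StrictMono g ∧ a * a = a ∧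
      ∀ i j : ℕ, i < j → c (g i) (g j) = a := by
  classical
  -- build a chain of infinite sets
  let T := {s : Set ℕ // s.Infinite}
  let nxt : T → T := fun A =>
    ⟨(step_lemma c A.1 A.2).choose_spec.choose,
      (step_lemma c A.1 A.2).choose_spec.choose_spec.2.1⟩
  let col : T → S := fun A => (step_lemma c A.1 A.2).choose
  have hnxt : ∀ A : T, (nxt A).1 ⊆ A.1 ∧
      ∀ y ∈ (nxt A).1, sInf A.1 < y ∧ c (sInf A.1) y = col A := fun A =>
    ⟨(step_lemma c A.1 A.2).choose_spec.choose_spec.1,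
      (step_lemma c A.1 A.2).choose_spec.choose_spec.2.2⟩
  let F : ℕ → T := fun n => nxt^[n] ⟨Set.univ, Set.infinite_univ⟩
  have hF : ∀ n, F (n + 1) = nxt (F n) := fun n =>
    Function.iterate_succ_apply' nxt n _
  let x : ℕ → ℕ := fun n => sInf (F n).1
  let h : ℕ → S := fun n => col (F n)
  have hxmem : ∀ n, x n ∈ (F n).1 := fun n => Nat.sInf_mem (F n).2.nonempty
  have hchain : ∀ i j, i < j → (F j).1 ⊆ (F (i + 1)).1 := by
    intro i j hij
    induction j with
    | zero => omega
    | succ k ih =>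
      rcases Nat.lt_succ_iff_lt_or_eq.mp hij with h' | h'
      · exact fun y hy => ih h' ((hF k ▸ (hnxt (F k)).1) hy)
      · rw [h']
  have key : ∀ i j, i < j → x i < x j ∧ c (x i) (x j) = h i := by
    intro i j hij
    have : x j ∈ (F (i + 1)).1 := hchain i j hij (hxmem j)
    rw [hF i] at this
    exact (hnxt (F i)).2 _ this
  -- pigeonhole on colors
  obtain ⟨a, ha⟩ := Finite.exists_infinite_fiber h
  have hinf : {n | h n = a}.Infinite := by
    rw [← Set.infinite_coe_iff]
    exact Infinite.of_injective (fun z : h ⁻¹' {a} => (⟨z.1, z.2⟩ : {n | h n = a}))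
      (fun z w hzw => Subtype.ext (congrArg Subtype.val hzw))
  have hnth : StrictMono (Nat.nth (· ∈ {n | h n = a})) := Nat.nth_strictMono hinf
  have hnthmem : ∀ i, h (Nat.nth (· ∈ {n | h n = a}) i) = a := fun i =>
    Nat.nth_mem_of_infinite hinf i
  set N := Nat.nth (· ∈ {n | h n = a}) with hN
  refine ⟨fun i => x (N i), a, ?_, ?_, ?_⟩
  · intro i j hij
    exact (key _ _ (hnth hij)).1
  · have h01 := key (N 0) (N 1) (hnth (by norm_num))
    have h12 := key (N 1) (N 2) (hnth (by norm_num))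
    have h02 := key (N 0) (N 2) (hnth (by norm_num))
    have := hc (x (N 0)) (x (N 1)) (x (N 2)) h01.1 h12.1
    rw [h01.2, h12.2, h02.2, hnthmem 0, hnthmem 1] at this
    exact this.symm
  · intro i j hij
    rw [(key _ _ (hnth hij)).2, hnthmem i]
end

section
/- Let S be a finite semigroup, let c : ℕ → ℕ → S be a multiplicative coloring (c i k = c i j * c j k whenever i < j < k), and let w : ℕ → ℕ be any function. Then there exist indices i < j such that c i j is idempotent (c i j * c i j = c i j) and w i ≤ w j. Equivalently, it is impossible that for every idempotent e of S, c i j = e always forces the strict decrease w j < w i. (This is the abstract core of the paper's Theorems 6 and 7: if every circular idempotent query-mapping pair has an arc from an argument in the domain to the corresponding argument in the range — forcing a strict decrease of a non-negative integer norm — then no infinite derivation exists.) -/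
/-!
Fix a nonprincipal ultrafilter `U` on `ℕ`. Each row `c i ·` is `U`-almost constant, say equal to
`f i`, and `f` is in turn `U`-almost constant, equal to `e`. Choosing `i < j < k` generically,
multiplicativity gives `e = c i k = c i j * c j k = e * e`. Among the `U`-many indices `i` whose
row is `U`-almost `e`, take one of minimal weight: `U`-almost every `j > i` is again such an index
with `c i j = e`, and its weight cannot be smaller.
-/

open Filter

theorem Ultrafilter.exists_eventually_eq_of_finite {α β : Type*} [Finite β] (U : Ultrafilter α)
    (g : α → β) : ∃ b, ∀ᶠ a in U, g a = b :=
  U.eventually_exists_iff.1 (.of_forall fun a => ⟨g a, rfl⟩)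

theorem exists_idempotent_eventually_eventually_eq {α S : Type*} [Preorder α] [NoTopOrder α]
    [Semigroup S] [Finite S] (U : Ultrafilter α) (hU : (U : Filter α) ≤ atTop) (c : α → α → S)
    (hc : ∀ i j k, i < j → j < k → c i k = c i j * c j k) :
    ∃ e : S, e * e = e ∧ ∀ᶠ i in U, ∀ᶠ j in U, c i j = e := by
  choose f hf using fun i => U.exists_eventually_eq_of_finite (c i)
  obtain ⟨e, he⟩ := U.exists_eventually_eq_of_finite f
  refine ⟨e, ?_, he.mono fun i hi => (hf i).mono fun j hj => hj.trans hi⟩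
  obtain ⟨i, hi⟩ := he.exists
  obtain ⟨j, hij, hcij, hj⟩ :=
    (((eventually_gt_atTop i).filter_mono hU).and ((hf i).and he)).exists
  obtain ⟨k, hjk, hcik, hcjk⟩ :=
    (((eventually_gt_atTop j).filter_mono hU).and ((hf i).and (hf j))).exists
  calc e * e = c i j * c j k := by rw [hcij, hcjk, hi, hj]
    _ = c i k := (hc i j k hij hjk).symm
    _ = e := by rw [hcik, hi]

/-- Abstract core of the query-mapping-pair termination criterion: for a
multiplicative coloring into a finite semigroup and any weight function,
some pair with idempotent color fails to strictly decrease the weight. -/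
theorem exists_idempotent_pair_no_decrease {S : Type*} [Semigroup S] [Finite S]
    (c : ℕ → ℕ → S)
    (hc : ∀ i j k : ℕ, i < j → j < k → c i k = c i j * c j k)
    (w : ℕ → ℕ) :
    ∃ i j : ℕ, i < j ∧ c i j * c i j = c i j ∧ w i ≤ w j := by
  by_contra! hdecr
  have hU : (hyperfilter ℕ : Filter ℕ) ≤ atTop := Nat.cofinite_eq_atTop ▸ hyperfilter_le_cofinite
  obtain ⟨e, he, hgood⟩ := exists_idempotent_eventually_eventually_eq _ hU c hc
  obtain ⟨i, hi : ∀ᶠ j in hyperfilter ℕ, c i j = e, hmin⟩ :=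
    (measure w).wf.has_min _ hgood.exists
  obtain ⟨j, hij, hcij, hj⟩ :=
    (((eventually_gt_atTop i).filter_mono hU).and (hi.and hgood)).exists
  exact hmin j hj (hdecr i j hij (by rw [hcij, he]))
end

section
/- Let f : ℤ → ℤ be any function satisfying f x = x - 10 for all x > 100 and f x = f (f (x + 11)) for all x ≤ 100. Then f x = 91 for all x ≤ 100. (This is the paper's claim that McCarthy's 91 program computes the same answers as the non-recursive program returning x - 10 for x > 100 and 91 for x ≤ 100.) -/
/-- Any function satisfying McCarthy's 91 recursion equals 91 on all inputs ≤ 100. -/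
theorem mccarthy91_eq (f : ℤ → ℤ)
    (h1 : ∀ x : ℤ, x > 100 → f x = x - 10)
    (h2 : ∀ x : ℤ, x ≤ 100 → f x = f (f (x + 11))) :
    ∀ x : ℤ, x ≤ 100 → f x = 91 := by
  have key : ∀ n : ℕ, ∀ x : ℤ, x ≤ 100 → 100 - x ≤ (n : ℤ) → f x = 91 := by
    intro n
    induction n with
    | zero =>
      intro x hx hn
      have : x = 100 := by omega
      subst this
      rw [h2 100 (by norm_num), show (100:ℤ) + 11 = 111 by norm_num,
        h1 111 (by norm_num), show (111:ℤ) - 10 = 101 by norm_num,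
        h1 101 (by norm_num)]
      norm_num
    | succ n ih =>
      intro x hx hn
      by_cases h90 : x ≥ 90
      · rw [h2 x hx, h1 (x + 11) (by omega)]
        have : x + 11 - 10 = x + 1 := by ring
        rw [this]
        by_cases h100 : x + 1 > 100
        · rw [h1 (x + 1) h100]; omega
        · exact ih (x + 1) (by omega) (by omega)
      · have hin : f (x + 11) = 91 := ih (x + 11) (by omega) (by omega)
        rw [h2 x hx, hin]
        exact ih 91 (by norm_num) (by omega)
  intro x hx
  exact key (100 - x).toNat x hx (by omega)
end

section
/- Define the relation mc : ℤ → ℤ → Prop inductively by: (i) if x > 100 then mc x (x - 10); (ii) if x ≤ 100, mc (x + 11) z and mc z y, then mc x y. Then for all integers x, y: mc x y holds if and only if (x > 100 and y = x - 10) or (x ≤ 100 and y = 91). (This characterizes the success set of McCarthy's 91 logic program, which the paper's abstract interpretation of answers approximates.) -/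
/-- Success set of McCarthy's 91 logic program. -/
inductive mc : ℤ → ℤ → Prop
  | base : ∀ x : ℤ, x > 100 → mc x (x - 10)
  | step : ∀ x z y : ℤ, x ≤ 100 → mc (x + 11) z → mc z y → mc x y

lemma mc91 : ∀ n : ℕ, ∀ x : ℤ, x ≤ 100 → 100 - x ≤ (n : ℤ) → mc x 91 := by
  intro n
  induction n with
  | zero =>
    intro x h1 h2
    have hx : x = 100 := by omega
    subst hx
    have h101 : mc 111 101 := by
      have := mc.base 111 (by norm_num)
      norm_num at this ⊢
      exact this
    have h91 : mc 101 91 := by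
      have := mc.base 101 (by norm_num)
      norm_num at this ⊢
      exact this
    exact mc.step 100 101 91 (by norm_num) (by norm_num; exact h101) h91
  | succ n ih =>
    intro x h1 h2
    by_cases hx : x + 11 > 100
    · -- x ≥ 90
      have h1' : mc (x + 11) (x + 1) := by
        have := mc.base (x + 11) hx
        have he : x + 11 - 10 = x + 1 := by ring
        rwa [he] at this
      have h2' : mc (x + 1) 91 := by
        by_cases hx1 : x + 1 > 100
        · have hxe : x = 100 := by omega
          subst hxe
          have := mc.base 101 (by norm_num)
          norm_num at this ⊢
          exact this
        · exact ih (x + 1) (by omega) (by omega)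
      exact mc.step x (x + 1) 91 h1 h1' h2'
    · have h1' : mc (x + 11) 91 := ih (x + 11) (by omega) (by omega)
      have h2' : mc 91 91 := ih 91 (by norm_num) (by omega)
      exact mc.step x 91 91 h1 h1' h2'

/-- Characterization of the success set of McCarthy's 91 logic program. -/
theorem mc_iff : ∀ x y : ℤ, mc x y ↔ (x > 100 ∧ y = x - 10) ∨ (x ≤ 100 ∧ y = 91) := by
  intro x y
  constructor
  · intro h
    induction h with
    | base x hx => left; exact ⟨hx, rfl⟩
    | step x z y hx h1 h2 ih1 ih2 => right; constructor; exact hx; omega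
  · rintro (⟨h1, h2⟩ | ⟨h1, h2⟩)
    · subst h2; exact mc.base x h1
    · subst h2
      exact mc91 (100 - x).toNat x h1 (by omega)
end

section
/- Define the relation mc : ℤ → ℤ → Prop inductively by: (i) if x > 100 then mc x (x - 10); (ii) if x ≤ 100, mc (x + 11) z and mc z y, then mc x y. Then mc is total: for every integer x there exists an integer y with mc x y. (This expresses the termination/definedness of McCarthy's 91 program for every integer input, which the paper proves automatically using the termination function 100 − arg1 on the abstract domain {small, med, big}.) -/
lemma mc101 : mc 101 91 := by
  have := mc.base 101 (by norm_num)
  norm_num at this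
  exact this

lemma mc_le100 : ∀ n : ℕ, ∀ x : ℤ, 101 - x ≤ (n : ℤ) → x ≤ 100 → mc x 91 := by
  intro n
  induction n with
  | zero => intro x h hx; omega
  | succ n ih =>
    intro x h hx
    by_cases hb : x + 11 > 100
    · -- x ≥ 90
      have h1 : mc (x + 11) (x + 1) := by
        have := mc.base (x + 11) hb
        have e : x + 11 - 10 = x + 1 := by ring
        rwa [e] at this
      by_cases hc : x = 100
      · subst hc
        exact mc.step 100 (100 + 1) 91 (by norm_num) h1 (by norm_num [mc101])
      · have h2 : mc (x + 1) 91 := ih (x + 1) (by omega) (by omega)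
        exact mc.step x (x + 1) 91 hx h1 h2
    · -- x + 11 ≤ 100
      have h1 : mc (x + 11) 91 := ih (x + 11) (by omega) (by omega)
      have h2 : mc 91 91 := ih 91 (by omega) (by norm_num)
      exact mc.step x 91 91 hx h1 h2

/-- McCarthy's 91 program terminates (is total) on every integer input. -/
theorem mc_total : ∀ x : ℤ, ∃ y : ℤ, mc x y := by
  intro x
  by_cases h : x > 100
  · exact ⟨x - 10, mc.base x h⟩
  · push_neg at h
    exact ⟨91, mc_le100 (101 - x).toNat x (by omega) h⟩
end
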